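/- arXiv:1607.08748 — 8 statements merged into one kernel-verified Lean document; each statement's English description precedes it below -/
import Mathlib

section
/- For all ε_x, ε_y in (-1,1), the quantity Tr·B = ((3 - ε_x ε_y)² - 9(ε_x + ε_y)²)/16 lies in the open interval (-2, 1), where Tr = (-3 - 3ε_x - 3ε_y + ε_x ε_y)/4 and B = (-3 + 3ε_x + 3ε_y + ε_x ε_y)/4. -/
/-! In terms of `s = εx + εy` and `p = εx εy` the product is `((3 - p)² - 9 s²) / 16`.
Since `|p| < 1`, the factor `3 - p` lies in `(2, 4)`, which gives the upper bound. For the lower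
bound, `(1 - εx)(1 - εy) > 0` and `(1 + εx)(1 + εy) > 0` say `|s| < 1 + p`, so
`(3 - p)² - 9 s² > (3 - p)² - 9 (1 + p)² = -32 + 8 (1 - p) (4 + p) > -32`. -/

section
variable {α : Type*} [CommRing α] [LinearOrder α] [IsStrictOrderedRing α]

lemma abs_mul_lt_one_of_mem_Ioo {x y : α} (hx : x ∈ Set.Ioo (-1) 1) (hy : y ∈ Set.Ioo (-1) 1) :
    |x * y| < 1 := by
  rw [abs_mul]
  exact mul_lt_one_of_nonneg_of_lt_one_left (abs_nonneg x) (abs_lt.2 hx) (abs_lt.2 hy).le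

lemma abs_add_lt_one_add_mul_of_mem_Ioo {x y : α} (hx : x ∈ Set.Ioo (-1) 1)
    (hy : y ∈ Set.Ioo (-1) 1) : |x + y| < 1 + x * y := by
  obtain ⟨hx₁, hx₂⟩ := hx
  obtain ⟨hy₁, hy₂⟩ := hy
  have hneg : 0 < (1 + x) * (1 + y) := mul_pos (by linarith) (by linarith)
  have hpos : 0 < (1 - x) * (1 - y) := mul_pos (by linarith) (by linarith)
  rw [abs_lt]
  constructor <;> linarith

lemma sq_sub_nine_mul_sq_lt_sixteen {s p : α} (hp : |p| < 1) : (3 - p) ^ 2 - 9 * s ^ 2 < 16 := by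
  obtain ⟨hp₁, hp₂⟩ := abs_lt.1 hp
  have : (3 - p) ^ 2 < 4 ^ 2 := sq_lt_sq' (by linarith) (by linarith)
  nlinarith [sq_nonneg s]

lemma neg_thirtytwo_lt_sq_sub_nine_mul_sq {s p : α} (hp : |p| < 1) (hs : |s| < 1 + p) :
    -32 < (3 - p) ^ 2 - 9 * s ^ 2 := by
  obtain ⟨hp₁, hp₂⟩ := abs_lt.1 hp
  obtain ⟨hs₁, hs₂⟩ := abs_lt.1 hs
  have hsq : s ^ 2 < (1 + p) ^ 2 := sq_lt_sq' hs₁ hs₂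
  have hpos : 0 < (1 - p) * (4 + p) := mul_pos (by linarith) (by linarith)
  calc (-32 : α) < -32 + 8 * ((1 - p) * (4 + p)) := by linarith
    _ = (3 - p) ^ 2 - 9 * (1 + p) ^ 2 := by ring
    _ < (3 - p) ^ 2 - 9 * s ^ 2 := by linarith

end

theorem stmt0 (εx εy : ℝ) (hx : εx ∈ Set.Ioo (-1 : ℝ) 1) (hy : εy ∈ Set.Ioo (-1 : ℝ) 1) :
    ((-3 - 3*εx - 3*εy + εx*εy)/4) * ((-3 + 3*εx + 3*εy + εx*εy)/4)
      = ((3 - εx*εy)^2 - 9*(εx + εy)^2)/16 ∧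
    -2 < ((3 - εx*εy)^2 - 9*(εx + εy)^2)/16 ∧
    ((3 - εx*εy)^2 - 9*(εx + εy)^2)/16 < 1 := by
  have hp := abs_mul_lt_one_of_mem_Ioo hx hy
  have hs := abs_add_lt_one_add_mul_of_mem_Ioo hx hy
  refine ⟨by ring, ?_, ?_⟩
  · linarith [neg_thirtytwo_lt_sq_sub_nine_mul_sq hp hs]
  · linarith [sq_sub_nine_mul_sq_lt_sixteen (s := εx + εy) hp]
end

section
/- Let ε_x, ε_y ∈ (-1,1) and consider the cubic p(λ) = -λ³ + Tr·λ² - B·λ + 1 with Tr = (-3 - 3ε_x - 3ε_y + ε_x ε_y)/4 and B = (-3 + 3ε_x + 3ε_y + ε_x ε_y)/4. Then p has exactly one real root and two non-real complex conjugate roots. -/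
/-!
Writing `p(λ) = -(λ³ + aλ² + bλ + c)`, the monic cubic has a real root `r` and factors as
`(λ - r) Q(λ)` with `Q` quadratic. The discriminant of the cubic is `discrim Q · Q(r)²`, so a
negative cubic discriminant forces `Q` to have negative discriminant: `r` is then the only real
root and the roots of `Q` are a non-real conjugate pair. In terms of `s = εx + εy` and
`q = εx εy`, the condition `εx, εy ∈ (-1, 1)` gives `-1 < q < 1` and `s² < (1 + q)²`, and
`-256 (1 + q)²` times the discriminant is a sum of terms that are then visibly positive.
-/

open ComplexConjugate

theorem exists_root_of_monic_cubic (a b c : ℝ) : ∃ r : ℝ, r ^ 3 + a * r ^ 2 + b * r + c = 0 := by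
  set M := 1 + |a| + |b| + |c|
  have hM1 : 1 ≤ M := by linarith [abs_nonneg a, abs_nonneg b, abs_nonneg c]
  have hM0 : 0 ≤ M := by linarith
  have hMM : M ≤ M ^ 2 := by nlinarith
  have hpos : 0 ≤ M ^ 3 + a * M ^ 2 + b * M + c := by
    nlinarith [neg_abs_le c, mul_le_mul_of_nonneg_left (neg_abs_le a) (sq_nonneg M),
      mul_le_mul_of_nonneg_left (neg_abs_le b) hM0,
      mul_le_mul_of_nonneg_left hMM (abs_nonneg b), mul_le_mul_of_nonneg_left hM1 (abs_nonneg c)]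
  have hneg : (-M) ^ 3 + a * (-M) ^ 2 + b * (-M) + c ≤ 0 := by
    nlinarith [le_abs_self c, mul_le_mul_of_nonneg_left (le_abs_self a) (sq_nonneg M),
      mul_le_mul_of_nonneg_left (neg_abs_le b) hM0,
      mul_le_mul_of_nonneg_left hMM (abs_nonneg b), mul_le_mul_of_nonneg_left hM1 (abs_nonneg c)]
  obtain ⟨r, -, hr⟩ := intermediate_value_Icc (by linarith : -M ≤ M)
    (by fun_prop : Continuous fun x : ℝ => x ^ 3 + a * x ^ 2 + b * x + c).continuousOn
    ⟨hneg, hpos⟩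
  exact ⟨r, hr⟩

section CommRing

variable {R : Type*} [CommRing R] {a b c r : R}

theorem monic_cubic_eq_mul_quadratic (hr : r ^ 3 + a * r ^ 2 + b * r + c = 0) (x : R) :
    x ^ 3 + a * x ^ 2 + b * x + c = (x - r) * (x ^ 2 + (r + a) * x + (r ^ 2 + a * r + b)) := by
  linear_combination hr

theorem Cubic.discr_monic_eq_discrim_mul_sq (hr : r ^ 3 + a * r ^ 2 + b * r + c = 0) :
    (Cubic.mk 1 a b c).discr =
      discrim 1 (r + a) (r ^ 2 + a * r + b) * (3 * r ^ 2 + 2 * a * r + b) ^ 2 := by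
  simp only [Cubic.discr, discrim]
  linear_combination (-27 * c + 18 * a * b - 4 * a ^ 3 + 27 * (r ^ 3 + a * r ^ 2 + b * r)) * hr

end CommRing

theorem exists_im_ne_zero_root_of_discrim_neg {p q : ℝ} (h : discrim 1 p q < 0) :
    ∃ z : ℂ, z.im ≠ 0 ∧ z ^ 2 + p * z + q = 0 := by
  have h' : 0 < 4 * q - p ^ 2 := by simp only [discrim] at h; linarith
  set δ := Real.sqrt (4 * q - p ^ 2)
  have hδ : 0 < δ := Real.sqrt_pos.mpr h'
  have hδsq : (δ : ℂ) ^ 2 = 4 * q - p ^ 2 := by exact_mod_cast Real.sq_sqrt h'.le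
  refine ⟨(-p / 2 : ℝ) + (δ / 2 : ℝ) * Complex.I, by simpa using hδ.ne', ?_⟩
  push_cast
  linear_combination (-1 / 4 : ℂ) * hδsq + ((δ : ℂ) / 2) ^ 2 * Complex.I_sq

theorem conj_root_of_real_cubic {a b c : ℝ} {z : ℂ} (hz : z ^ 3 + a * z ^ 2 + b * z + c = 0) :
    conj z ^ 3 + a * conj z ^ 2 + b * conj z + c = 0 := by
  simpa using congrArg conj hz

theorem monic_cubic_roots_of_discr_neg {a b c : ℝ} (h : (Cubic.mk 1 a b c).discr < 0) :
    (∃! x : ℝ, x ^ 3 + a * x ^ 2 + b * x + c = 0) ∧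
      ∃ z : ℂ, z.im ≠ 0 ∧ z ^ 3 + a * z ^ 2 + b * z + c = 0 ∧
        conj z ^ 3 + a * conj z ^ 2 + b * conj z + c = 0 := by
  obtain ⟨r, hr⟩ := exists_root_of_monic_cubic a b c
  have hq : discrim 1 (r + a) (r ^ 2 + a * r + b) < 0 := by
    rw [Cubic.discr_monic_eq_discrim_mul_sq hr] at h
    exact neg_of_mul_neg_left h (sq_nonneg _)
  have hq_ne (x : ℝ) : x ^ 2 + (r + a) * x + (r ^ 2 + a * r + b) ≠ 0 := by
    simpa [sq] using quadratic_ne_zero_of_discrim_ne_sq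
      (fun s hs => (sq_nonneg s).not_gt (hs ▸ hq)) x
  obtain ⟨z, hz_im, hz⟩ := exists_im_ne_zero_root_of_discrim_neg hq
  have hr' : (r : ℂ) ^ 3 + a * (r : ℂ) ^ 2 + b * r + c = 0 := by exact_mod_cast hr
  have hz_root : z ^ 3 + a * z ^ 2 + b * z + c = 0 := by
    rw [monic_cubic_eq_mul_quadratic hr' z]
    push_cast at hz
    rw [hz, mul_zero]
  refine ⟨⟨r, hr, fun x (hx : x ^ 3 + a * x ^ 2 + b * x + c = 0) => ?_⟩, z, hz_im, hz_root, conj_root_of_real_cubic hz_root⟩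
  rw [monic_cubic_eq_mul_quadratic hr x] at hx
  exact sub_eq_zero.mp ((mul_eq_zero.mp hx).resolve_right (hq_ne x))

theorem rsp_charpoly_discr_neg {s q : ℝ} (hq : -1 < q) (hq' : q < 1) (hs : s ^ 2 < (1 + q) ^ 2) :
    (Cubic.mk 1 ((3 + 3 * s - q) / 4) ((-3 + 3 * s + q) / 4) (-1)).discr < 0 := by
  have h1q : 0 < 1 + q := by linarith
  have hcubic : 0 < 54 + 9 * q ^ 2 - q ^ 3 := by nlinarith
  have hsum : 0 < ((1 + q) ^ 2 - s ^ 2) * (1 + q) * (15 - q) ^ 3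
      + 64 * s ^ 2 * (1 + q) * (54 + 9 * q ^ 2 - q ^ 3)
      + 81 * s ^ 2 * ((1 + q) ^ 2 - s ^ 2) * (1 + q) ^ 2 := by
    have : 0 < ((1 + q) ^ 2 - s ^ 2) * (1 + q) * (15 - q) ^ 3 :=
      mul_pos (mul_pos (by linarith) h1q) (pow_pos (by linarith) 3)
    have : 0 ≤ ((1 + q) ^ 2 - s ^ 2) := by linarith
    positivity
  have key : 256 * (1 + q) ^ 2 *
      (Cubic.mk 1 ((3 + 3 * s - q) / 4) ((-3 + 3 * s + q) / 4) (-1)).discr =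
      -(((1 + q) ^ 2 - s ^ 2) * (1 + q) * (15 - q) ^ 3
        + 64 * s ^ 2 * (1 + q) * (54 + 9 * q ^ 2 - q ^ 3)
        + 81 * s ^ 2 * ((1 + q) ^ 2 - s ^ 2) * (1 + q) ^ 2) := by
    simp only [Cubic.discr]
    ring
  have : 256 * (1 + q) ^ 2 *
      (Cubic.mk 1 ((3 + 3 * s - q) / 4) ((-3 + 3 * s + q) / 4) (-1)).discr < 0 := by linarith
  exact neg_of_mul_neg_right this (by positivity)

theorem stmt1 (εx εy : ℝ) (hx : εx ∈ Set.Ioo (-1 : ℝ) 1) (hy : εy ∈ Set.Ioo (-1 : ℝ) 1) :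
    (∃! x : ℝ, -x^3 + ((-3 - 3*εx - 3*εy + εx*εy)/4) * x^2
        - ((-3 + 3*εx + 3*εy + εx*εy)/4) * x + 1 = 0) ∧
    (∃ z : ℂ, z.im ≠ 0 ∧
      -z^3 + (((-3 - 3*εx - 3*εy + εx*εy)/4 : ℝ) : ℂ) * z^2
        - (((-3 + 3*εx + 3*εy + εx*εy)/4 : ℝ) : ℂ) * z + 1 = 0 ∧
      -(starRingEnd ℂ z)^3 + (((-3 - 3*εx - 3*εy + εx*εy)/4 : ℝ) : ℂ) * (starRingEnd ℂ z)^2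
        - (((-3 + 3*εx + 3*εy + εx*εy)/4 : ℝ) : ℂ) * (starRingEnd ℂ z) + 1 = 0) := by
  obtain ⟨hx1, hx2⟩ := hx
  obtain ⟨hy1, hy2⟩ := hy
  have hdiscr := rsp_charpoly_discr_neg (s := εx + εy) (q := εx * εy) (by nlinarith) (by nlinarith)
    (by nlinarith [mul_pos (by nlinarith : 0 < 1 - εx ^ 2) (by nlinarith : 0 < 1 - εy ^ 2)])
  obtain ⟨⟨r, hr, hr_uniq⟩, z, hz_im, hz, hz_conj⟩ := monic_cubic_roots_of_discr_neg hdiscr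
  refine ⟨⟨r, by linear_combination -hr, fun x hx => hr_uniq x (by linear_combination -hx)⟩,
    z, hz_im, ?_, ?_⟩
  · push_cast at hz ⊢
    linear_combination -hz
  · push_cast at hz_conj ⊢
    linear_combination -hz_conj
end

section
/- For all ε_x, ε_y ∈ (-1,1), Δ(ε_x, ε_y) < 0, where Δ(ε_x, ε_y) = 18·Tr·B - 4·Tr³ + Tr²·B² - 4·B³ - 27 with Tr = (-3 - 3ε_x - 3ε_y + ε_x ε_y)/4 and B = (-3 + 3ε_x + 3ε_y + ε_x ε_y)/4. -/
/-!
Put `a = 1 + εx`, `b = 1 - εx`, `c = 1 + εy`, `d = 1 - εy`, all positive on the open square.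
Since `a + b = c + d = 2`, the polynomial `-256 Δ` homogenises to a form of bidegree `(4, 4)`
in `(a, b)` and `(c, d)`: its expansion in the Bernstein basis of `[-1, 1]²`. All coefficients of
that expansion are nonnegative (the two that vanish reflect `Δ = 0` at the corners `±(1, -1)`),
so `-Δ > 0` on the open square.
-/

def discriminantBernsteinForm (a b c d : ℝ) : ℝ :=
  a ^ 4 * (31 * c ^ 4 + 78 * c ^ 3 * d + 75 * c ^ 2 * d ^ 2 + 32 * c * d ^ 3)
  + a ^ 3 * b * (78 * c ^ 4 + 256 * c ^ 3 * d + 312 * c ^ 2 * d ^ 2 + 186 * c * d ^ 3 + 32 * d ^ 4)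
  + a ^ 2 * b ^ 2 * (75 * c ^ 4 + 312 * c ^ 3 * d + 441 * c ^ 2 * d ^ 2 + 312 * c * d ^ 3
      + 75 * d ^ 4)
  + a * b ^ 3 * (32 * c ^ 4 + 186 * c ^ 3 * d + 312 * c ^ 2 * d ^ 2 + 256 * c * d ^ 3 + 78 * d ^ 4)
  + b ^ 4 * (32 * c ^ 3 * d + 75 * c ^ 2 * d ^ 2 + 78 * c * d ^ 3 + 31 * d ^ 4)

theorem discriminantBernsteinForm_pos {a b c d : ℝ} (ha : 0 < a) (hb : 0 < b) (hc : 0 < c)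
    (hd : 0 < d) : 0 < discriminantBernsteinForm a b c d := by
  unfold discriminantBernsteinForm
  positivity

theorem discriminant_eq_bernsteinForm (εx εy : ℝ) :
    18 * ((-3 - 3*εx - 3*εy + εx*εy)/4) * ((-3 + 3*εx + 3*εy + εx*εy)/4)
      - 4 * ((-3 - 3*εx - 3*εy + εx*εy)/4)^3
      + ((-3 - 3*εx - 3*εy + εx*εy)/4)^2 * ((-3 + 3*εx + 3*εy + εx*εy)/4)^2
      - 4 * ((-3 + 3*εx + 3*εy + εx*εy)/4)^3 - 27
      = -discriminantBernsteinForm (1 + εx) (1 - εx) (1 + εy) (1 - εy) / 256 := by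
  unfold discriminantBernsteinForm
  ring

theorem stmt3 (εx εy : ℝ) (hx : εx ∈ Set.Ioo (-1 : ℝ) 1) (hy : εy ∈ Set.Ioo (-1 : ℝ) 1) :
    18 * ((-3 - 3*εx - 3*εy + εx*εy)/4) * ((-3 + 3*εx + 3*εy + εx*εy)/4)
      - 4 * ((-3 - 3*εx - 3*εy + εx*εy)/4)^3
      + ((-3 - 3*εx - 3*εy + εx*εy)/4)^2 * ((-3 + 3*εx + 3*εy + εx*εy)/4)^2
      - 4 * ((-3 + 3*εx + 3*εy + εx*εy)/4)^3 - 27 < 0 := by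
  obtain ⟨hx₁, hx₂⟩ := hx
  obtain ⟨hy₁, hy₂⟩ := hy
  rw [discriminant_eq_bernsteinForm]
  have hform := discriminantBernsteinForm_pos (by linarith : 0 < 1 + εx)
    (by linarith : 0 < 1 - εx) (by linarith : 0 < 1 + εy) (by linarith : 0 < 1 - εy)
  exact div_neg_of_neg_of_pos (neg_neg_of_pos hform) (by norm_num)
end

section
/- Let λ₁ > 0 be real, α < 0 and β real with λ₁(α² + β²) = 1 and 2α(λ₁ - 1) + (α² + β²) - λ₁ = (3/2)(ε_x + ε_y). If ε_x + ε_y > 0 then λ₁ ≤ 1 (so λ₁ is not the maximal-modulus root); if ε_x + ε_y < 0 then λ₁ ≥ 1 (so λ₁ is the maximal-modulus root). -/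
/-! Since `α² + β² = 1 / λ₁`, multiplying the relation by `λ₁` factors it as
`λ₁ · (3/2)(ε_x + ε_y) = (λ₁ - 1)(2αλ₁ - 1 - λ₁)`. For `α < 0` the second factor is negative,
so `λ₁ - 1` has the sign opposite to `ε_x + ε_y`. -/

section

variable {lam α s c : ℝ}

theorem mul_eq_sub_one_mul_of_mul_eq_one (hdet : lam * s = 1)
    (hrel : 2 * α * (lam - 1) + s - lam = c) :
    lam * c = (lam - 1) * (2 * α * lam - (1 + lam)) := by
  linear_combination hdet - lam * hrel

theorem lt_one_and_one_lt_of_mul_eq_one (hlam : 0 < lam) (hα : α < 0) (hdet : lam * s = 1)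
    (hrel : 2 * α * (lam - 1) + s - lam = c) : (0 < c → lam < 1) ∧ (c < 0 → 1 < lam) := by
  have hfactor : 2 * α * lam - (1 + lam) ≤ 0 := by nlinarith
  have hprod := mul_eq_sub_one_mul_of_mul_eq_one hdet hrel
  refine ⟨fun hc => ?_, fun hc => ?_⟩
  · have := neg_of_mul_pos_left (hprod ▸ mul_pos hlam hc) hfactor
    linarith
  · have := pos_of_mul_neg_left (hprod ▸ mul_neg_of_pos_of_neg hlam hc) hfactor
    linarith

end

theorem stmt7 (lam α β εx εy : ℝ) (hlam : lam > 0) (hα : α < 0)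
    (hdet : lam * (α^2 + β^2) = 1)
    (hrel : 2*α*(lam - 1) + (α^2 + β^2) - lam = (3/2) * (εx + εy)) :
    (εx + εy > 0 → lam ≤ 1) ∧ (εx + εy < 0 → lam ≥ 1) := by
  obtain ⟨hpos, hneg⟩ := lt_one_and_one_lt_of_mul_eq_one hlam hα hdet hrel
  exact ⟨fun h => (hpos (by positivity)).le, fun h => (hneg (by linarith)).le⟩
end

section
/- Let ε_x, ε_y ∈ (-1,1), and let M be the 3×3 matrix [[(-1-3ε_x-ε_y+ε_x ε_y)/4, (1-ε_x)/2, 1], [(3+ε_y²)/4, -(1+ε_y)/2, 0], [(1-ε_y)/2, 1, 0]]. If λ₁ > 1 is a real eigenvalue of M, then the vector w = (λ₁ + (1+ε_y)/2, (3+ε_y²)/4, λ₁² - Tr(M)λ₁ + B(M) + (1-ε_y)/2) is an eigenvector of M for λ₁ and all three coordinates of w are strictly positive. -/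
/-!
The determinant of `M` equals `1`, so `λ` is a root of `λ³ - Tr(M) λ² + B(M) λ - 1`. Since the third
column of `M` is the first unit vector, the second row of the eigenvalue equation forces
`w₁ (λ - M₁₁) = M₁₀ w₀`, and the third coordinate is then recovered from the characteristic equation:
`λ w₂ = det M + λ M₂₀`. This last identity also makes `w₂` positive.
-/

namespace Matrix

variable {R : Type*} [CommRing R]

def sumPrincipalMinorsTwo (M : Matrix (Fin 3) (Fin 3) R) : R :=
  (M 0 0 * M 1 1 - M 0 1 * M 1 0) + (M 0 0 * M 2 2 - M 0 2 * M 2 0) +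
    (M 1 1 * M 2 2 - M 1 2 * M 2 1)

theorem det_sub_smul_one_fin_three (M : Matrix (Fin 3) (Fin 3) R) (t : R) :
    (M - t • (1 : Matrix (Fin 3) (Fin 3) R)).det =
      -(t ^ 3 - M.trace * t ^ 2 + sumPrincipalMinorsTwo M * t - M.det) := by
  simp only [det_fin_three, trace_fin_three, sumPrincipalMinorsTwo, sub_apply, smul_apply,
    one_apply_eq, one_apply_ne (by decide : (0 : Fin 3) ≠ 1),
    one_apply_ne (by decide : (0 : Fin 3) ≠ 2), one_apply_ne (by decide : (1 : Fin 3) ≠ 0),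
    one_apply_ne (by decide : (1 : Fin 3) ≠ 2), one_apply_ne (by decide : (2 : Fin 3) ≠ 0),
    one_apply_ne (by decide : (2 : Fin 3) ≠ 1), smul_eq_mul, mul_zero, mul_one]
  ring

theorem charpoly_eq_zero_of_mulVec_eq_smul {K : Type*} [Field K] {M : Matrix (Fin 3) (Fin 3) K}
    {t : K} {v : Fin 3 → K} (hv : v ≠ 0) (h : M *ᵥ v = t • v) :
    t ^ 3 - M.trace * t ^ 2 + sumPrincipalMinorsTwo M * t - M.det = 0 := by
  have hker : (M - t • (1 : Matrix (Fin 3) (Fin 3) K)) *ᵥ v = 0 := by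
    rw [sub_mulVec, h, smul_mulVec, one_mulVec, sub_self]
  have hdet := exists_mulVec_eq_zero_iff.mp ⟨v, hv, hker⟩
  rwa [det_sub_smul_one_fin_three, neg_eq_zero] at hdet

/-- Meant for matrices whose third column is `(1, 0, 0)`, for which it is an eigenvector at every
root `t` of the characteristic polynomial. -/
def eigenvectorOfColTwo (M : Matrix (Fin 3) (Fin 3) R) (t : R) : Fin 3 → R :=
  ![t - M 1 1, M 1 0, t ^ 2 - M.trace * t + sumPrincipalMinorsTwo M + M 2 0]

section ColTwo

variable {M : Matrix (Fin 3) (Fin 3) R}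

theorem det_of_colTwo (h02 : M 0 2 = 1) (h12 : M 1 2 = 0) (h22 : M 2 2 = 0) :
    M.det = M 1 0 * M 2 1 - M 1 1 * M 2 0 := by
  rw [det_fin_three, h02, h12, h22]
  ring

theorem mul_eigenvectorOfColTwo_two {t : R}
    (ht : t ^ 3 - M.trace * t ^ 2 + sumPrincipalMinorsTwo M * t - M.det = 0) :
    t * eigenvectorOfColTwo M t 2 = M.det + t * M 2 0 := by
  simp only [eigenvectorOfColTwo, cons_val_two, Nat.succ_eq_add_one, Nat.reduceAdd, tail_cons,
    head_cons]
  linear_combination ht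

theorem mulVec_eigenvectorOfColTwo {t : R} (h02 : M 0 2 = 1) (h12 : M 1 2 = 0)
    (h22 : M 2 2 = 0) (ht : t ^ 3 - M.trace * t ^ 2 + sumPrincipalMinorsTwo M * t - M.det = 0) :
    M *ᵥ eigenvectorOfColTwo M t = t • eigenvectorOfColTwo M t := by
  have h2 := mul_eigenvectorOfColTwo_two ht
  rw [det_of_colTwo h02 h12 h22] at h2
  ext i
  fin_cases i <;>
    simp only [eigenvectorOfColTwo, trace_fin_three, sumPrincipalMinorsTwo, mulVec, dotProduct,
      Fin.sum_univ_three, Pi.smul_apply, smul_eq_mul, Fin.zero_eta, Fin.mk_one, Fin.reduceFinMk,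
      cons_val_zero, cons_val_one, cons_val_two, Nat.succ_eq_add_one, Nat.reduceAdd, tail_cons,
      head_cons, h02, h12, h22] at h2 ⊢
  · ring
  · ring
  · linear_combination -h2

end ColTwo

theorem eigenvectorOfColTwo_pos {M : Matrix (Fin 3) (Fin 3) ℝ} {t : ℝ}
    (ht : t ^ 3 - M.trace * t ^ 2 + sumPrincipalMinorsTwo M * t - M.det = 0) (ht0 : 0 < t)
    (ht11 : M 1 1 < t) (h10 : 0 < M 1 0) (h20 : 0 ≤ M 2 0) (hdet : 0 < M.det) (i : Fin 3) :
    0 < eigenvectorOfColTwo M t i := by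
  fin_cases i
  · exact sub_pos.mpr ht11
  · exact h10
  · exact pos_of_mul_pos_right (mul_eigenvectorOfColTwo_two ht ▸ by positivity) ht0.le

end Matrix

open Matrix in
theorem stmt9_general (εx εy lam : ℝ) (hy : εy ∈ Set.Ioo (-1 : ℝ) 1)
    (hlam : lam > 1)
    (M : Matrix (Fin 3) (Fin 3) ℝ)
    (hM : M = !![(-1 - 3*εx - εy + εx*εy)/4, (1 - εx)/2, 1;
                 (3 + εy^2)/4, -(1 + εy)/2, 0;
                 (1 - εy)/2, 1, 0])
    (heig : ∃ v : Fin 3 → ℝ, v ≠ 0 ∧ M.mulVec v = lam • v) :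
    let trM : ℝ := (-3 - 3*εx - 3*εy + εx*εy)/4
    let BM : ℝ := (-3 + 3*εx + 3*εy + εx*εy)/4
    let w : Fin 3 → ℝ := ![lam + (1 + εy)/2, (3 + εy^2)/4,
      lam^2 - trM * lam + BM + (1 - εy)/2]
    M.mulVec w = lam • w ∧ 0 < w 0 ∧ 0 < w 1 ∧ 0 < w 2 := by
  intro trM BM w
  obtain ⟨hy₁, hy₂⟩ := hy
  obtain ⟨v, hv, hvM⟩ := heig
  have hroot := charpoly_eq_zero_of_mulVec_eq_smul hv hvM
  have htr : M.trace = trM := by rw [hM, trace_fin_three]; simp; ring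
  have hB : sumPrincipalMinorsTwo M = BM := by rw [hM, sumPrincipalMinorsTwo]; simp; ring
  have hdet : M.det = 1 := by rw [hM, det_fin_three]; simp; ring
  have hw : w = eigenvectorOfColTwo M lam := by
    rw [eigenvectorOfColTwo, htr, hB, hM]
    ext i; fin_cases i <;> simp [w]; ring
  have h02 : M 0 2 = 1 := by simp [hM]
  have h12 : M 1 2 = 0 := by simp [hM]
  have h22 : M 2 2 = 0 := by simp [hM]
  rw [hw]
  have hpos := eigenvectorOfColTwo_pos hroot (by linarith) (by simp [hM]; linarith)
    (by simp [hM]; positivity) (by simp [hM]; linarith) (by rw [hdet]; norm_num)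
  exact ⟨mulVec_eigenvectorOfColTwo h02 h12 h22 hroot, hpos 0, hpos 1, hpos 2⟩

theorem stmt9 (εx εy lam : ℝ) (hx : εx ∈ Set.Ioo (-1 : ℝ) 1) (hy : εy ∈ Set.Ioo (-1 : ℝ) 1)
    (hlam : lam > 1)
    (M : Matrix (Fin 3) (Fin 3) ℝ)
    (hM : M = !![(-1 - 3*εx - εy + εx*εy)/4, (1 - εx)/2, 1;
                 (3 + εy^2)/4, -(1 + εy)/2, 0;
                 (1 - εy)/2, 1, 0])
    (heig : ∃ v : Fin 3 → ℝ, v ≠ 0 ∧ M.mulVec v = lam • v) :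
    let trM : ℝ := (-3 - 3*εx - 3*εy + εx*εy)/4
    let BM : ℝ := (-3 + 3*εx + 3*εy + εx*εy)/4
    let w : Fin 3 → ℝ := ![lam + (1 + εy)/2, (3 + εy^2)/4,
      lam^2 - trM * lam + BM + (1 - εy)/2]
    M.mulVec w = lam • w ∧ 0 < w 0 ∧ 0 < w 1 ∧ 0 < w 2 :=
  stmt9_general εx εy lam hy hlam M hM heig
end

section
/- With F_index defined as: +∞ if all coordinates are ≥ 0; -∞ if all are ≤ 0; 0 if the coordinate sum is 0; sum/max if max > 0 and sum < 0; -sum/min if min < 0 and sum > 0; one has for all ε_x, ε_y ∈ (-1,1): F_index((-1-3ε_x-ε_y+ε_x ε_y)/4, (1-ε_x)/2, 1) = +∞ if -1-3ε_x-ε_y+ε_x ε_y > 0, and = (5-ε_y)(1-ε_x)/(1+3ε_x+ε_y-ε_x ε_y) if -1-3ε_x-ε_y+ε_x ε_y < 0. -/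
noncomputable def Findex (a1 a2 a3 : ℝ) : EReal :=
  if 0 ≤ min a1 (min a2 a3) then ⊤
  else if max a1 (max a2 a3) ≤ 0 then ⊥
  else if a1 + a2 + a3 = 0 then 0
  else if a1 + a2 + a3 < 0 then (((a1 + a2 + a3) / max a1 (max a2 a3) : ℝ) : EReal)
  else ((-(a1 + a2 + a3) / min a1 (min a2 a3) : ℝ) : EReal)

theorem Findex_of_nonneg {a1 a2 a3 : ℝ} (h1 : 0 ≤ a1) (h2 : 0 ≤ a2) (h3 : 0 ≤ a3) :
    Findex a1 a2 a3 = ⊤ :=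
  if_pos (le_min h1 (le_min h2 h3))

theorem Findex_of_neg_of_sum_pos {a1 a2 a3 : ℝ} (h1 : a1 < 0) (h12 : a1 ≤ a2) (h13 : a1 ≤ a3)
    (hsum : 0 < a1 + a2 + a3) :
    Findex a1 a2 a3 = ((-(a1 + a2 + a3) / a1 : ℝ) : EReal) := by
  have hmin : min a1 (min a2 a3) = a1 := min_eq_left (le_min h12 h13)
  have hmax : ¬ max a1 (max a2 a3) ≤ 0 := fun h => by
    simp only [max_le_iff] at h
    linarith
  rw [Findex, if_neg (by rw [hmin]; exact h1.not_ge), if_neg hmax, if_neg hsum.ne',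
    if_neg hsum.not_gt, hmin]

theorem stmt12 (εx εy : ℝ) (hx : εx ∈ Set.Ioo (-1 : ℝ) 1) (hy : εy ∈ Set.Ioo (-1 : ℝ) 1) :
    (-1 - 3*εx - εy + εx*εy > 0 →
      Findex ((-1 - 3*εx - εy + εx*εy)/4) ((1 - εx)/2) 1 = ⊤) ∧
    (-1 - 3*εx - εy + εx*εy < 0 →
      Findex ((-1 - 3*εx - εy + εx*εy)/4) ((1 - εx)/2) 1
        = (((5 - εy)*(1 - εx)/(1 + 3*εx + εy - εx*εy) : ℝ) : EReal)) := by
  obtain ⟨-, hx1⟩ := hx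
  obtain ⟨-, hy1⟩ := hy
  have hsum : (-1 - 3*εx - εy + εx*εy)/4 + (1 - εx)/2 + 1 = (5 - εy)*(1 - εx)/4 := by ring
  refine ⟨fun h => Findex_of_nonneg (by linarith) (by linarith) zero_le_one, fun h => ?_⟩
  rw [Findex_of_neg_of_sum_pos (by linarith) (by linarith) (by linarith)
    (by rw [hsum]; nlinarith), hsum]
  have hD : 1 + 3*εx + εy - εx*εy ≠ 0 := by linarith
  congr 1
  rw [show (-1 - 3*εx - εy + εx*εy)/4 = -((1 + 3*εx + εy - εx*εy)/4) by ring]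
  field_simp
end

section
/- For ε_x, ε_y ∈ (-1,1) with ε_x + ε_y > 0, ε_x < ε_y, and (5-ε_x)ε_y² + (ε_x²+10ε_x+1)ε_y - (1-ε_x)(4+5ε_x) > 0, one has (-4 + ε_x + (3-ε_x)ε_y + ε_y²)/((1-ε_x)(1+ε_y)) < 0 and min{(ε_y-ε_x)/(1-ε_y), (1+2ε_x+ε_y²)/(2(1-ε_x))} > 0. -/
/-!
The numerator of the first index factors as `(εy - 1) (εy + 4 - εx)`, negative for `εx < εy < 1`,
over a positive denominator. In the second index, `εy - εx > 0` handles the first entry of the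
minimum, and `1 + 2 εx + εy² = (1 - εy)² + 2 (εx + εy) > 0` the second.
-/

lemma neg_four_add_add_mul_add_sq_eq (a b : ℝ) :
    -4 + a + (3 - a) * b + b ^ 2 = (b - 1) * (b + 4 - a) := by
  ring

lemma one_add_two_mul_add_sq_pos {a b : ℝ} (h : 0 < a + b) : 0 < 1 + 2 * a + b ^ 2 := by
  have hsq : 1 + 2 * a + b ^ 2 = (1 - b) ^ 2 + 2 * (a + b) := by ring
  rw [hsq]
  positivity

theorem stmt14_general (εx εy : ℝ) (hy : εy ∈ Set.Ioo (-1 : ℝ) 1)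
    (hsum : εx + εy > 0) (hlt : εx < εy) :
    (-4 + εx + (3 - εx)*εy + εy^2)/((1 - εx)*(1 + εy)) < 0 ∧
    0 < min ((εy - εx)/(1 - εy)) ((1 + 2*εx + εy^2)/(2*(1 - εx))) := by
  obtain ⟨hy_gt, hy_lt⟩ := hy
  have hx_lt : εx < 1 := hlt.trans hy_lt
  refine ⟨?_, lt_min (div_pos (by linarith) (by linarith)) ?_⟩
  · rw [neg_four_add_add_mul_add_sq_eq]
    exact div_neg_of_neg_of_pos (mul_neg_of_neg_of_pos (by linarith) (by linarith))
      (mul_pos (by linarith) (by linarith))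
  · exact div_pos (one_add_two_mul_add_sq_pos hsum) (by linarith)

theorem stmt14 (εx εy : ℝ) (hx : εx ∈ Set.Ioo (-1 : ℝ) 1) (hy : εy ∈ Set.Ioo (-1 : ℝ) 1)
    (hsum : εx + εy > 0) (hlt : εx < εy)
    (hb : (5 - εx)*εy^2 + (εx^2 + 10*εx + 1)*εy - (1 - εx)*(4 + 5*εx) > 0) :
    (-4 + εx + (3 - εx)*εy + εy^2)/((1 - εx)*(1 + εy)) < 0 ∧
    0 < min ((εy - εx)/(1 - εy)) ((1 + 2*εx + εy^2)/(2*(1 - εx))) :=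
  stmt14_general εx εy hy hsum hlt
end

section
/- For all ε_x, ε_y ∈ (-1,1) with ε_x + ε_y < 0, the cubic p(λ) = -λ³ + Tr·λ² - B·λ + 1, with Tr = (-3-3ε_x-3ε_y+ε_x ε_y)/4 and B = (-3+3ε_x+3ε_y+ε_x ε_y)/4, has a real root λ₁ > 1 which is strictly greater in absolute value than the other two (complex conjugate) roots. -/
/-!
Write `p(t) = -t³ + T t² - B t + 1`. The hypotheses give `p(1) = T - B > 0`,
`p(-1) = T + B + 2 = (1 + εx εy) / 2 > 0` and `p(3) < 0`, so `p` has a root `u ∈ (1, 3)`.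
Dividing by `t - u` leaves the quadratic `t² + (u - T) t + 1/u`, which is positive at `±1`
(because `p` is) and has constant term `1/u < 1`; by the Jury criterion both of its roots lie
in the open unit disc, hence have modulus `< 1 < u`.
-/

theorem lt_one_of_quadratic_eq_zero {b c x : ℝ} (hc : c < 1) (h1 : 0 < 1 + b + c)
    (hx : x ^ 2 + b * x + c = 0) : x < 1 := by
  -- If `x ≥ 1`, the other root `y = -b - x` has `(1 - x) (1 - y) = 1 + b + c > 0`, so `y > 1` and
  -- `c = x y > 1`.
  by_contra! h
  nlinarith [mul_nonneg (sub_nonneg.2 h) (sub_nonneg.2 h)]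

theorem abs_lt_one_of_quadratic_eq_zero {b c x : ℝ} (hc : c < 1) (h1 : 0 < 1 + b + c)
    (hm1 : 0 < 1 - b + c) (hx : x ^ 2 + b * x + c = 0) : |x| < 1 := by
  refine abs_lt.2 ⟨?_, lt_one_of_quadratic_eq_zero hc h1 hx⟩
  have := lt_one_of_quadratic_eq_zero (b := -b) (x := -x) hc (by linarith)
    (by linear_combination hx)
  linarith

theorem norm_lt_one_of_quadratic_eq_zero {b c : ℝ} (hc : c < 1) (h1 : 0 < 1 + b + c)
    (hm1 : 0 < 1 - b + c) {z : ℂ} (hz : z ^ 2 + b * z + c = 0) : ‖z‖ < 1 := by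
  have hre : z.re ^ 2 - z.im ^ 2 + b * z.re + c = 0 := by
    simpa [sq] using congrArg Complex.re hz
  have him : z.im * (2 * z.re + b) = 0 := by
    have := congrArg Complex.im hz
    simp only [sq, Complex.add_im, Complex.mul_im, Complex.ofReal_re, Complex.ofReal_im,
      Complex.zero_im] at this
    linear_combination this
  rcases mul_eq_zero.mp him with hreal | hre_eq
  · rw [← Complex.abs_re_eq_norm.2 hreal]
    exact abs_lt_one_of_quadratic_eq_zero hc h1 hm1 (by simpa [hreal] using hre)
  · rw [← sq_lt_one_iff₀ (norm_nonneg z), Complex.sq_norm, Complex.normSq_apply]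
    nlinarith

theorem norm_lt_one_of_cubic_eq_zero {T B u : ℝ} (hu : 1 < u)
    (hpu : -u ^ 3 + T * u ^ 2 - B * u + 1 = 0) (hp1 : B < T) (hpm1 : 0 < T + B + 2) {z : ℂ}
    (hz : -z ^ 3 + (T : ℂ) * z ^ 2 - (B : ℂ) * z + 1 = 0) (hzu : z ≠ u) : ‖z‖ < 1 := by
  set c := u ^ 2 - T * u + B with hc
  have huc : u * c = 1 := by linear_combination -hpu
  have hfactor (t : ℝ) :
      -t ^ 3 + T * t ^ 2 - B * t + 1 = -(t - u) * (t ^ 2 + (u - T) * t + c) := by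
    linear_combination -huc
  refine norm_lt_one_of_quadratic_eq_zero (b := u - T) (c := c) (by nlinarith) ?_ ?_ ?_
  · nlinarith [hfactor 1]
  · nlinarith [hfactor (-1)]
  · have hcC : (c : ℂ) = (u : ℂ) ^ 2 - T * u + B := by push_cast [hc]; ring
    have hucC : (u : ℂ) * c = 1 := by exact_mod_cast huc
    have : (u - z) * (z ^ 2 + (u - T : ℝ) * z + c) = 0 := by
      push_cast; linear_combination hz - z * hcC + hucC
    exact (mul_eq_zero.mp this).resolve_left (sub_ne_zero.mpr (Ne.symm hzu))

theorem stmt18 (εx εy : ℝ) (hx : εx ∈ Set.Ioo (-1 : ℝ) 1) (hy : εy ∈ Set.Ioo (-1 : ℝ) 1)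
    (hsum : εx + εy < 0) :
    ∃ lam : ℝ, lam > 1 ∧
      -lam^3 + ((-3 - 3*εx - 3*εy + εx*εy)/4) * lam^2
        - ((-3 + 3*εx + 3*εy + εx*εy)/4) * lam + 1 = 0 ∧
      ∀ z : ℂ, -z^3 + (((-3 - 3*εx - 3*εy + εx*εy)/4 : ℝ) : ℂ) * z^2
          - (((-3 + 3*εx + 3*εy + εx*εy)/4 : ℝ) : ℂ) * z + 1 = 0 →
        z ≠ (lam : ℂ) → ‖z‖ < lam := by
  have hprod : |εx * εy| < 1 := by
    rw [abs_mul]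
    exact mul_lt_one_of_nonneg_of_lt_one_left (abs_nonneg _) (abs_lt.2 hx) (abs_lt.2 hy).le
  obtain ⟨hprod1, hprod2⟩ := abs_lt.1 hprod
  set T : ℝ := (-3 - 3*εx - 3*εy + εx*εy)/4 with hT
  set B : ℝ := (-3 + 3*εx + 3*εy + εx*εy)/4 with hB
  have hp1 : B < T := by linarith
  have hpm1 : 0 < T + B + 2 := by linarith
  have hp3 : -3 ^ 3 + T * 3 ^ 2 - B * 3 + 1 < 0 := by linarith [hx.1, hy.1]
  obtain ⟨u, ⟨hu1, -⟩, hpu⟩ := intermediate_value_Icc' (by norm_num : (1 : ℝ) ≤ 3)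
    (by fun_prop : Continuous fun t : ℝ => -t ^ 3 + T * t ^ 2 - B * t + 1).continuousOn
    ⟨hp3.le, by linarith⟩
  have hu : 1 < u := hu1.lt_of_ne (by rintro rfl; linarith)
  exact ⟨u, hu, hpu, fun z hz hzu =>
    (norm_lt_one_of_cubic_eq_zero hu hpu hp1 hpm1 hz hzu).trans hu⟩
end
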